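/- arXiv:2601.08963 — 3 statements merged into one kernel-verified Lean document; each statement's English description precedes it below -/
import Mathlib

section
/- Under the uniform bounds ‖J_F(z)‖₂ ≤ κ < 1, ‖H_{F,i}(z)‖_op ≤ B, ‖r(z)‖ ≤ R_max on a region Z, if (1-κ)²/σ² > C_B where C_B = R_max√d·B/σ², then g(z) = (1/(2σ²))‖z - x + F(z)‖² is m-strongly convex on Z with m = (1-κ)²/σ² - C_B > 0. -/
open scoped RealInnerProductSpace

/-! The Hessian quadratic form of `g` is
`∇²g(z)[v, v] = σ⁻² (‖v + J_F(z) v‖² + ⟪r(z), D²F(z)[v, v]⟫)`.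
The first term is at least `(1 - κ)² ‖v‖²` by the reverse triangle inequality. Each coordinate of
`D²F(z)[v, v]` is bounded by `B ‖v‖²`, so its Euclidean norm is at most `√d B ‖v‖²`, and
Cauchy–Schwarz bounds the second term below by `-R_max √d B ‖v‖²`. -/

section

variable {𝕜 E G H : Type*} [NontriviallyNormedField 𝕜]
  [NormedAddCommGroup E] [NormedSpace 𝕜 E] [NormedAddCommGroup G] [NormedSpace 𝕜 G]
  [NormedAddCommGroup H] [NormedSpace 𝕜 H]

theorem fderiv_clm_apply_const_apply {f : E → G →L[𝕜] H} {z : E} (hf : DifferentiableAt 𝕜 f z)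
    (w : G) (v : E) : fderiv 𝕜 (fun p => f p w) z v = fderiv 𝕜 f z v w := by
  simp [fderiv_clm_apply hf (differentiableAt_const w)]

theorem ContinuousLinearMap.fderiv_fderiv_comp_apply (L : G →L[𝕜] H) {F : E → G} {z : E}
    (hF : Differentiable 𝕜 F) (hF' : DifferentiableAt 𝕜 (fderiv 𝕜 F) z) (v w : E) :
    fderiv 𝕜 (fderiv 𝕜 fun q => L (F q)) z v w = L (fderiv 𝕜 (fderiv 𝕜 F) z v w) := by
  have hLF : fderiv 𝕜 (fun q => L (F q)) = compL 𝕜 E G H L ∘ fderiv 𝕜 F :=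
    funext fun p => (L.hasFDerivAt.comp p (hF p).hasFDerivAt).fderiv
  rw [hLF, ((compL 𝕜 E G H L).hasFDerivAt.comp z hF'.hasFDerivAt).fderiv]
  rfl

end

section

variable {E F : Type*} [NormedAddCommGroup E] [InnerProductSpace ℝ E]
  [NormedAddCommGroup F] [InnerProductSpace ℝ F]

theorem inner_fderiv_gradient_apply [CompleteSpace E] (g : E → ℝ) (z v w : E) :
    ⟪fderiv ℝ (gradient g) z v, w⟫ = fderiv ℝ (fderiv ℝ g) z v w := by
  let L : StrongDual ℝ E ≃L[ℝ] E := (InnerProductSpace.toDual ℝ E).symm.toContinuousLinearEquiv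
  have hgrad : gradient g = L ∘ fderiv ℝ g := rfl
  rw [hgrad, L.comp_fderiv]
  exact InnerProductSpace.toDual_symm_apply

theorem fderiv_fderiv_const_mul_norm_sq_apply {r : E → F} {z : E} (hr : Differentiable ℝ r)
    (hr' : DifferentiableAt ℝ (fderiv ℝ r) z) (c : ℝ) (v w : E) :
    fderiv ℝ (fderiv ℝ fun p => c * ‖r p‖ ^ 2) z v w =
      2 * c * (⟪fderiv ℝ r z v, fderiv ℝ r z w⟫ + ⟪r z, fderiv ℝ (fderiv ℝ r) z v w⟫) := by
  have hg' : fderiv ℝ (fun p => c * ‖r p‖ ^ 2) =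
      fun p => c • (2 • (innerSL ℝ (r p)).comp (fderiv ℝ r p)) :=
    funext fun p => (((hr p).hasFDerivAt.norm_sq).const_mul c).fderiv
  have hg'_diff : DifferentiableAt ℝ (fderiv ℝ fun p => c * ‖r p‖ ^ 2) z := by
    rw [hg']
    exact ((((innerSL ℝ).differentiableAt.comp z (hr z)).clm_comp hr').const_smul 2).const_smul c
  have hr'w : DifferentiableAt ℝ (fun p => fderiv ℝ r p w) z :=
    hr'.clm_apply (differentiableAt_const w)
  rw [← fderiv_clm_apply_const_apply hg'_diff, hg']
  simp only [smul_apply, ContinuousLinearMap.comp_apply, innerSL_apply_apply,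
    smul_eq_mul, nsmul_eq_mul]
  rw [fderiv_const_mul (((hr z).inner ℝ hr'w).const_mul _), fderiv_const_mul ((hr z).inner ℝ hr'w),
    smul_apply, smul_apply, fderiv_inner_apply ℝ (hr z) hr'w, fderiv_clm_apply_const_apply hr']
  simp only [smul_eq_mul]
  ring

end

theorem EuclideanSpace.norm_le_sqrt_card_mul {ι : Type*} [Fintype ι] {y : EuclideanSpace ℝ ι}
    {c : ℝ} (hy : ∀ i, |y i| ≤ c) : ‖y‖ ≤ √(Fintype.card ι) * c := by
  rcases isEmpty_or_nonempty ι with hι | ⟨⟨i⟩⟩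
  · simp [Subsingleton.elim y 0]
  have hc : 0 ≤ c := (abs_nonneg _).trans (hy i)
  rw [← Real.sqrt_sq hc, ← Real.sqrt_mul (Nat.cast_nonneg _), EuclideanSpace.norm_eq]
  gcongr
  calc ∑ i, ‖y i‖ ^ 2 ≤ ∑ _i : ι, c ^ 2 := by
        gcongr with i
        exact (Real.norm_eq_abs _).trans_le (hy i)
    _ = Fintype.card ι * c ^ 2 := by simp

theorem one_sub_mul_norm_le_norm_add_apply {E : Type*} [SeminormedAddCommGroup E]
    [NormedSpace ℝ E] {A : E →L[ℝ] E} {κ : ℝ} (hA : ‖A‖ ≤ κ) (v : E) :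
    (1 - κ) * ‖v‖ ≤ ‖v + A v‖ := by
  have hAv : ‖A v‖ ≤ κ * ‖v‖ := A.le_of_opNorm_le hA v
  have := norm_sub_norm_le v (-A v)
  rw [sub_neg_eq_add, norm_neg] at this
  linarith

theorem norm_fderiv_fderiv_apply_le {E ι : Type*} [NormedAddCommGroup E] [NormedSpace ℝ E]
    [Fintype ι] {F : E → EuclideanSpace ℝ ι} {z : E} (hF : Differentiable ℝ F)
    (hF' : DifferentiableAt ℝ (fderiv ℝ F) z) {B : ℝ}
    (hB : ∀ i, ‖fderiv ℝ (fun p => fderiv ℝ (fun q => F q i) p) z‖ ≤ B) (v w : E) :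
    ‖fderiv ℝ (fderiv ℝ F) z v w‖ ≤ √(Fintype.card ι) * (B * ‖v‖ * ‖w‖) := by
  refine EuclideanSpace.norm_le_sqrt_card_mul fun i => ?_
  set Hᵢ := fderiv ℝ (fun p => fderiv ℝ (fun q => F q i) p) z
  have hcoord : Hᵢ v w = fderiv ℝ (fderiv ℝ F) z v w i :=
    (EuclideanSpace.proj i).fderiv_fderiv_comp_apply hF hF' v w
  rw [← hcoord, ← Real.norm_eq_abs]
  calc ‖Hᵢ v w‖ ≤ ‖Hᵢ‖ * ‖v‖ * ‖w‖ := Hᵢ.le_opNorm₂ v w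
    _ ≤ B * ‖v‖ * ‖w‖ := by gcongr; exact hB i

theorem fderiv_sub_const_add {E : Type*} [NormedAddCommGroup E] [NormedSpace ℝ E] {F : E → E}
    (hF : Differentiable ℝ F) (x : E) :
    fderiv ℝ (fun w => w - x + F w) = fun w => ContinuousLinearMap.id ℝ E + fderiv ℝ F w :=
  funext fun w => (((hasFDerivAt_id w).sub_const x).add (hF w).hasFDerivAt).fderiv

theorem strong_convexity_constant_step_size_general
    (d : ℕ) (σ : ℝ)
    (F : EuclideanSpace ℝ (Fin d) → EuclideanSpace ℝ (Fin d))
    (hF : ContDiff ℝ 2 F)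
    (x : EuclideanSpace ℝ (Fin d))
    (Z : Set (EuclideanSpace ℝ (Fin d)))
    (r : EuclideanSpace ℝ (Fin d) → EuclideanSpace ℝ (Fin d))
    (hr : ∀ w, r w = w - x + F w)
    (g : EuclideanSpace ℝ (Fin d) → ℝ)
    (hg : ∀ w, g w = (1 / (2 * σ ^ 2)) * ‖r w‖ ^ 2)
    (κ B Rmax CB m : ℝ) (hκ1 : κ < 1)
    (hJ : ∀ z ∈ Z, ‖fderiv ℝ F z‖ ≤ κ)
    (hHess : ∀ z ∈ Z, ∀ i : Fin d,
      ‖fderiv ℝ (fun p => fderiv ℝ (fun q => F q i) p) z‖ ≤ B)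
    (hres : ∀ z ∈ Z, ‖r z‖ ≤ Rmax)
    (hCB : CB = Rmax * Real.sqrt d * B / σ ^ 2)
    (hm : m = (1 - κ) ^ 2 / σ ^ 2 - CB)
    (hcond : CB < (1 - κ) ^ 2 / σ ^ 2) :
    0 < m ∧
      ∀ z ∈ Z, ∀ v : EuclideanSpace ℝ (Fin d),
        m * ‖v‖ ^ 2 ≤ ⟪fderiv ℝ (gradient g) z v, v⟫ := by
  refine ⟨by linarith, fun z hz v => ?_⟩
  have hF1 : Differentiable ℝ F := hF.differentiable two_ne_zero
  have hF2 : Differentiable ℝ (fderiv ℝ F) := (hF.fderiv_right le_rfl).differentiable one_ne_zero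
  have hr' : fderiv ℝ r = fun w => ContinuousLinearMap.id ℝ _ + fderiv ℝ F w := by
    rw [funext hr]; exact fderiv_sub_const_add hF1 x
  have hr1 : Differentiable ℝ r := by rw [funext hr]; fun_prop
  have hr2 : DifferentiableAt ℝ (fderiv ℝ r) z := by rw [hr']; exact (hF2 z).const_add _
  have hr'' : fderiv ℝ (fderiv ℝ r) z = fderiv ℝ (fderiv ℝ F) z := by rw [hr', fderiv_const_add]
  obtain rfl : g = fun w => 1 / (2 * σ ^ 2) * ‖r w‖ ^ 2 := funext hg
  rw [inner_fderiv_gradient_apply, fderiv_fderiv_const_mul_norm_sq_apply hr1 hr2, hr'',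
    real_inner_self_eq_norm_sq, hr']
  have hlin : (1 - κ) ^ 2 * ‖v‖ ^ 2 ≤ ‖v + fderiv ℝ F z v‖ ^ 2 := by
    rw [← mul_pow]
    exact pow_le_pow_left₀ (mul_nonneg (by linarith) (norm_nonneg v))
      (one_sub_mul_norm_le_norm_add_apply (hJ z hz) v) 2
  have hcurv : -(Rmax * (√d * (B * ‖v‖ * ‖v‖))) ≤ ⟪r z, fderiv ℝ (fderiv ℝ F) z v v⟫ := by
    have hT := norm_fderiv_fderiv_apply_le hF1 (hF2 z) (hHess z hz) v v
    rw [Fintype.card_fin] at hT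
    exact neg_le_of_abs_le ((abs_real_inner_le_norm _ _).trans
      (mul_le_mul (hres z hz) hT (norm_nonneg _) ((norm_nonneg _).trans (hres z hz))))
  calc m * ‖v‖ ^ 2
      = (σ ^ 2)⁻¹ * ((1 - κ) ^ 2 * ‖v‖ ^ 2 - Rmax * (√d * (B * ‖v‖ * ‖v‖))) := by
        rw [hm, hCB]; ring
    _ ≤ (σ ^ 2)⁻¹ * (‖v + fderiv ℝ F z v‖ ^ 2 + ⟪r z, fderiv ℝ (fderiv ℝ F) z v v⟫) := by
        gcongr; linarith
    _ = _ := by simp only [add_apply, ContinuousLinearMap.id_apply]; ring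

/-- Under the uniform bounds `‖J_F(z)‖₂ ≤ κ < 1`, `‖H_{F,i}(z)‖_op ≤ B`,
`‖r(z)‖ ≤ R_max` on a region `Z`, if `(1-κ)²/σ² > C_B` with `C_B = R_max √d B / σ²`,
then `g` is `m`-strongly convex on `Z` with `m = (1-κ)²/σ² - C_B > 0`
(i.e. `∇²g(z) ⪰ m I` for all `z ∈ Z`). -/
theorem strong_convexity_constant_step_size
    (d : ℕ) (σ : ℝ) (hσ : 0 < σ)
    (F : EuclideanSpace ℝ (Fin d) → EuclideanSpace ℝ (Fin d))
    (hF : ContDiff ℝ 2 F)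
    (x : EuclideanSpace ℝ (Fin d))
    (Z : Set (EuclideanSpace ℝ (Fin d)))
    (r : EuclideanSpace ℝ (Fin d) → EuclideanSpace ℝ (Fin d))
    (hr : ∀ w, r w = w - x + F w)
    (g : EuclideanSpace ℝ (Fin d) → ℝ)
    (hg : ∀ w, g w = (1 / (2 * σ ^ 2)) * ‖r w‖ ^ 2)
    (κ B Rmax CB m : ℝ) (hκ1 : κ < 1) (hκ0 : 0 ≤ κ) (hB : 0 ≤ B) (hRmax : 0 ≤ Rmax)
    (hJ : ∀ z ∈ Z, ‖fderiv ℝ F z‖ ≤ κ)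
    (hHess : ∀ z ∈ Z, ∀ i : Fin d,
      ‖fderiv ℝ (fun p => fderiv ℝ (fun q => F q i) p) z‖ ≤ B)
    (hres : ∀ z ∈ Z, ‖r z‖ ≤ Rmax)
    (hCB : CB = Rmax * Real.sqrt d * B / σ ^ 2)
    (hm : m = (1 - κ) ^ 2 / σ ^ 2 - CB)
    (hcond : CB < (1 - κ) ^ 2 / σ ^ 2) :
    0 < m ∧
      ∀ z ∈ Z, ∀ v : EuclideanSpace ℝ (Fin d),
        m * ‖v‖ ^ 2 ≤ ⟪fderiv ℝ (gradient g) z v, v⟫ :=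
  strong_convexity_constant_step_size_general d σ F hF x Z r hr g hg κ B Rmax CB m hκ1 hJ hHess hres
    hCB hm hcond
end

section
/- If a function f : ℝ^d × ℝ^m → ℝ≥0 is jointly log-concave in (z, x) and integrable in x for each z, then the marginal h(z) = ∫ f(z, x) dx is log-concave in z (Prékopa's theorem applied to the reverse transition kernel times the current marginal). -/
/-!
The marginal inherits log-concavity through the Prékopa–Leindler inequality: if
`F x ^ t * G y ^ (1 - t) ≤ H (t • x + (1 - t) • y)` for all `x y`, then
`(∫ F) ^ t * (∫ G) ^ (1 - t) ≤ ∫ H`; apply it to the sections `f (z₁, ·)`, `f (z₂, ·)` and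
`f (l • z₁ + (1 - l) • z₂, ·)`. On `ℝ`, after truncating `F`, `G` and rescaling `G` so that both
have the same supremum, every superlevel set `{H > s}` contains `t • {F > s} + (1 - t) • {G > s}`,
whose two summands are nonempty or empty together. The one-dimensional Brunn–Minkowski inequality
and the layer-cake formula then give `t ∫ F + (1 - t) ∫ G ≤ ∫ H`, and AM–GM concludes. Tonelli
carries the inequality to products, hence to `ℝⁿ`.
-/

open MeasureTheory Set
open scoped ENNReal NNReal Pointwise

lemma ENNReal.rpow_mul_rpow_le_add {t : ℝ} (ht : t ∈ Ioo 0 1) (a b : ℝ≥0∞) :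
    a ^ t * b ^ (1 - t) ≤ ENNReal.ofReal t * a + ENNReal.ofReal (1 - t) * b := by
  have h1t : 0 < 1 - t := sub_pos.2 ht.2
  rcases eq_or_ne a ⊤ with rfl | ha
  · simp [ENNReal.mul_top (ENNReal.ofReal_pos.2 ht.1).ne']
  rcases eq_or_ne b ⊤ with rfl | hb
  · simp [ENNReal.mul_top (ENNReal.ofReal_pos.2 h1t).ne']
  lift a to ℝ≥0 using ha
  lift b to ℝ≥0 using hb
  have := NNReal.geom_mean_le_arith_mean2_weighted t.toNNReal (1 - t).toNNReal a b
    (by ext; simp [ht.1.le, h1t.le])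
  rw [Real.coe_toNNReal _ ht.1.le, Real.coe_toNNReal _ h1t.le] at this
  rw [← ENNReal.coe_rpow_of_nonneg _ ht.1.le, ← ENNReal.coe_rpow_of_nonneg _ h1t.le,
    ENNReal.ofReal, ENNReal.ofReal]
  exact_mod_cast this

lemma ENNReal.ofReal_rpow_mul_ofReal_rpow {a b : ℝ} (ha : 0 ≤ a) (hb : 0 ≤ b) {p q : ℝ}
    (hp : 0 ≤ p) (hq : 0 ≤ q) :
    ENNReal.ofReal a ^ p * ENNReal.ofReal b ^ q = ENNReal.ofReal (a ^ p * b ^ q) := by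
  rw [ENNReal.ofReal_rpow_of_nonneg ha hp, ENNReal.ofReal_rpow_of_nonneg hb hq,
    ENNReal.ofReal_mul (Real.rpow_nonneg ha p)]

lemma ENNReal.iSup_rpow_mul_iSup_rpow_le {ι : Type*} [Preorder ι] [IsDirectedOrder ι]
    {a b : ι → ℝ≥0∞} (ha : Monotone a) (hb : Monotone b) {p q : ℝ} (hp : 0 < p) (hq : 0 < q)
    {c : ℝ≥0∞} (h : ∀ i, a i ^ p * b i ^ q ≤ c) :
    (⨆ i, a i) ^ p * (⨆ i, b i) ^ q ≤ c := by
  simp only [← ENNReal.orderIsoRpow_apply _ hp, ← ENNReal.orderIsoRpow_apply _ hq,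
    OrderIso.map_iSup, ENNReal.iSup_mul, ENNReal.mul_iSup]
  refine iSup_le fun i => iSup_le fun j => ?_
  obtain ⟨k, hik, hjk⟩ := exists_ge_ge i j
  simp only [ENNReal.orderIsoRpow_apply]
  exact (mul_le_mul' (ENNReal.rpow_le_rpow (ha hjk) hp.le)
    (ENNReal.rpow_le_rpow (hb hik) hq.le)).trans (h k)

theorem AEMeasurable.exists_measurable_ge_lintegral_eq {α : Type*} [MeasurableSpace α]
    {μ : Measure α} {f : α → ℝ≥0∞} (hf : AEMeasurable f μ) :
    ∃ g : α → ℝ≥0∞, Measurable g ∧ f ≤ g ∧ ∫⁻ a, g a ∂μ = ∫⁻ a, f a ∂μ := by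
  classical
  set N := toMeasurable μ {x | f x ≠ hf.mk f x}
  have hN : ∀ᵐ x ∂μ, x ∉ N :=
    (measure_eq_zero_iff_ae_notMem).1 (by rw [measure_toMeasurable]; exact hf.ae_eq_mk)
  refine ⟨fun x => if x ∈ N then ⊤ else hf.mk f x,
    Measurable.ite (measurableSet_toMeasurable _ _) measurable_const hf.measurable_mk,
    fun x => ?_, lintegral_congr_ae ?_⟩
  · by_cases hx : x ∈ N
    · simp [hx]
    · simpa [hx] using (not_not.1 fun h => hx (subset_toMeasurable _ _ h)).le
  · filter_upwards [hN, hf.ae_eq_mk] with x hxN hx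
    simp [hxN, hx]

theorem lintegral_eq_lintegral_meas_ofReal_lt {α : Type*} [MeasurableSpace α] (μ : Measure α)
    [SFinite μ] {f : α → ℝ≥0∞} (hf : Measurable f) :
    ∫⁻ x, f x ∂μ = ∫⁻ s in Ioi 0, μ {x | ENNReal.ofReal s < f x} := by
  have hS : MeasurableSet {p : α × ℝ | ENNReal.ofReal p.2 < f p.1} :=
    measurableSet_lt (by fun_prop) (by fun_prop)
  -- both sides are the `μ × volume` measure of the region under the graph of `f`
  have hlevel (c : ℝ≥0∞) : volume ({s : ℝ | ENNReal.ofReal s < c} ∩ Ioi 0) = c := by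
    rcases eq_or_ne c ⊤ with rfl | hc
    · simp
    · have : {s : ℝ | ENNReal.ofReal s < c} ∩ Ioi 0 = Ioo 0 c.toReal := by
        ext s
        simp +contextual [ENNReal.ofReal_lt_iff_lt_toReal _ hc, le_of_lt, and_comm]
      rw [this, Real.volume_Ioo, sub_zero, ENNReal.ofReal_toReal hc]
  calc ∫⁻ x, f x ∂μ = μ.prod (volume.restrict (Ioi 0)) {p | ENNReal.ofReal p.2 < f p.1} := by
        rw [Measure.prod_apply hS]
        refine lintegral_congr fun x => ?_
        change f x = volume.restrict (Ioi 0) {s | ENNReal.ofReal s < f x}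
        rw [Measure.restrict_apply (measurableSet_lt (by fun_prop) measurable_const)]
        exact (hlevel _).symm
    _ = ∫⁻ s in Ioi 0, μ {x | ENNReal.ofReal s < f x} := Measure.prod_apply_symm hS

namespace Real

/-- The translates `b + (A ∩ Iic a)` and `a + (B ∩ Ici b)` lie in `A + B` and meet at most in
`a + b`. -/
lemma volume_inter_Iic_add_volume_inter_Ici_le {A B : Set ℝ} {a b : ℝ} (ha : a ∈ A) (hb : b ∈ B) :
    volume (A ∩ Iic a) + volume (B ∩ Ici b) ≤ volume (A + B) := by
  have hleft : b +ᵥ (A ∩ Iio a) ⊆ (A + B) ∩ Iio (a + b) := by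
    rintro _ ⟨x, ⟨hxA, hxa⟩, rfl⟩
    exact ⟨⟨x, hxA, b, hb, add_comm x b⟩, by simp [vadd_eq_add]; linarith [mem_Iio.1 hxa]⟩
  have hright : a +ᵥ (B ∩ Ici b) ⊆ (A + B) \ Iio (a + b) := by
    rintro _ ⟨y, ⟨hyB, hyb⟩, rfl⟩
    exact ⟨⟨a, ha, y, hyB, rfl⟩, by simp [vadd_eq_add]; linarith [mem_Ici.1 hyb]⟩
  calc volume (A ∩ Iic a) + volume (B ∩ Ici b)
      = volume (b +ᵥ (A ∩ Iio a)) + volume (a +ᵥ (B ∩ Ici b)) := by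
        rw [measure_vadd, measure_vadd, measure_congr ((ae_eq_refl A).inter Iio_ae_eq_Iic)]
    _ ≤ volume ((A + B) ∩ Iio (a + b)) + volume ((A + B) \ Iio (a + b)) := by gcongr
    _ = volume (A + B) := measure_inter_add_sdiff _ measurableSet_Iio

lemma volume_le_iSup_volume_inter_Iic {A : Set ℝ} (hA : MeasurableSet A) (hne : A.Nonempty) :
    volume A ≤ ⨆ a ∈ A, volume (A ∩ Iic a) := by
  rw [hA.measure_eq_iSup_isCompact]
  refine iSup₂_le fun K hKA => iSup_le fun hK => ?_
  obtain ⟨a, ha, hKa⟩ : ∃ a ∈ A, K ⊆ Iic a := by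
    rcases K.eq_empty_or_nonempty with rfl | hKne
    · exact ⟨hne.some, hne.some_mem, empty_subset _⟩
    · exact ⟨sSup K, hKA (hK.sSup_mem hKne), fun x hx => le_csSup hK.bddAbove hx⟩
  exact le_iSup₂_of_le a ha (measure_mono (subset_inter hKA hKa))

lemma volume_le_iSup_volume_inter_Ici {A : Set ℝ} (hA : MeasurableSet A) (hne : A.Nonempty) :
    volume A ≤ ⨆ a ∈ A, volume (A ∩ Ici a) := by
  rw [hA.measure_eq_iSup_isCompact]
  refine iSup₂_le fun K hKA => iSup_le fun hK => ?_
  obtain ⟨a, ha, hKa⟩ : ∃ a ∈ A, K ⊆ Ici a := by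
    rcases K.eq_empty_or_nonempty with rfl | hKne
    · exact ⟨hne.some, hne.some_mem, empty_subset _⟩
    · exact ⟨sInf K, hKA (hK.sInf_mem hKne), fun x hx => csInf_le hK.bddBelow hx⟩
  exact le_iSup₂_of_le a ha (measure_mono (subset_inter hKA hKa))

theorem volume_add_volume_le_volume_add {A B : Set ℝ} (hA : MeasurableSet A)
    (hB : MeasurableSet B) (hAne : A.Nonempty) (hBne : B.Nonempty) :
    volume A + volume B ≤ volume (A + B) :=
  (add_le_add (volume_le_iSup_volume_inter_Iic hA hAne)
      (volume_le_iSup_volume_inter_Ici hB hBne)).trans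
    (ENNReal.biSup_add_biSup_le hAne hBne fun _ ha _ hb =>
      volume_inter_Iic_add_volume_inter_Ici_le ha hb)

end Real

lemma smul_superlevel_add_smul_superlevel_subset {E : Type*} [AddCommGroup E] [Module ℝ E]
    {t : ℝ} (ht : t ∈ Ioo 0 1) {F G H : E → ℝ≥0∞}
    (hFGH : ∀ x y, F x ^ t * G y ^ (1 - t) ≤ H (t • x + (1 - t) • y)) (s : ℝ≥0∞) :
    t • {x | s < F x} + (1 - t) • {y | s < G y} ⊆ {z | s < H z} := by
  rintro _ ⟨_, ⟨x, hx, rfl⟩, _, ⟨y, hy, rfl⟩, rfl⟩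
  calc s = s ^ t * s ^ (1 - t) := by
        rw [← ENNReal.rpow_add_of_nonneg _ _ ht.1.le (sub_nonneg.2 ht.2.le)]; simp
    _ < F x ^ t * G y ^ (1 - t) :=
        ENNReal.mul_lt_mul (ENNReal.rpow_lt_rpow hx ht.1) (ENNReal.rpow_lt_rpow hy (sub_pos.2 ht.2))
    _ ≤ H (t • x + (1 - t) • y) := hFGH x y

def PrekopaLeindler (E : Type*) [AddCommGroup E] [Module ℝ E] [MeasureSpace E] : Prop :=
  ∀ ⦃t : ℝ⦄, t ∈ Ioo 0 1 → ∀ ⦃F G H : E → ℝ≥0∞⦄, Measurable F → Measurable G → Measurable H →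
    (∀ x y, F x ^ t * G y ^ (1 - t) ≤ H (t • x + (1 - t) • y)) →
    (∫⁻ x, F x) ^ t * (∫⁻ x, G x) ^ (1 - t) ≤ ∫⁻ x, H x

namespace Real

variable {t : ℝ} {F G H : ℝ → ℝ≥0∞}

lemma add_le_volume_superlevel_of_iSup_eq (ht : t ∈ Ioo 0 1) (hF : Measurable F)
    (hG : Measurable G) (hsup : ⨆ x, F x = ⨆ x, G x)
    (hFGH : ∀ x y, F x ^ t * G y ^ (1 - t) ≤ H (t • x + (1 - t) • y)) (s : ℝ≥0∞) :
    ENNReal.ofReal t * volume {x | s < F x} + ENNReal.ofReal (1 - t) * volume {y | s < G y} ≤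
      volume {z | s < H z} := by
  by_cases hs : s < ⨆ x, F x
  · have hFne : {x | s < F x}.Nonempty := lt_iSup_iff.1 hs
    have hGne : {y | s < G y}.Nonempty := lt_iSup_iff.1 (hsup ▸ hs : s < ⨆ y, G y)
    have hmeas {φ : ℝ → ℝ≥0∞} (hφ : Measurable φ) (c : ℝ) : MeasurableSet (c • {x | s < φ x}) :=
      (measurableSet_lt measurable_const hφ).const_smul₀ c
    calc ENNReal.ofReal t * volume {x | s < F x} + ENNReal.ofReal (1 - t) * volume {y | s < G y}
        = volume (t • {x | s < F x}) + volume ((1 - t) • {y | s < G y}) := by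
          rw [Measure.addHaar_smul_of_nonneg _ ht.1.le,
            Measure.addHaar_smul_of_nonneg _ (sub_nonneg.2 ht.2.le), Module.finrank_self, pow_one,
            pow_one]
      _ ≤ volume (t • {x | s < F x} + (1 - t) • {y | s < G y}) :=
          volume_add_volume_le_volume_add (hmeas hF t) (hmeas hG (1 - t)) hFne.smul_set
            hGne.smul_set
      _ ≤ volume {z | s < H z} :=
          measure_mono (smul_superlevel_add_smul_superlevel_subset ht hFGH s)
  · have hempty {φ : ℝ → ℝ≥0∞} (hφ : ⨆ x, φ x ≤ s) : {x | s < φ x} = ∅ :=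
      eq_empty_of_forall_notMem fun x hx => (le_iSup φ x).trans hφ |>.not_gt hx
    rw [not_lt] at hs
    simp [hempty hs, hempty (hsup ▸ hs)]

lemma add_le_lintegral_of_iSup_eq (ht : t ∈ Ioo 0 1) (hF : Measurable F)
    (hG : Measurable G) (hH : Measurable H) (hsup : ⨆ x, F x = ⨆ x, G x)
    (hFGH : ∀ x y, F x ^ t * G y ^ (1 - t) ≤ H (t • x + (1 - t) • y)) :
    ENNReal.ofReal t * (∫⁻ x, F x) + ENNReal.ofReal (1 - t) * ∫⁻ x, G x ≤ ∫⁻ x, H x := by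
  rw [lintegral_eq_lintegral_meas_ofReal_lt volume hF,
    lintegral_eq_lintegral_meas_ofReal_lt volume hG,
    lintegral_eq_lintegral_meas_ofReal_lt volume hH]
  refine (add_le_add (lintegral_const_mul_le _ _) (lintegral_const_mul_le _ _)).trans
    ((le_lintegral_add _ _).trans (lintegral_mono fun s => ?_))
  exact add_le_volume_superlevel_of_iSup_eq ht hF hG hsup hFGH _

lemma prekopaLeindler_of_iSup_ne_top (ht : t ∈ Ioo 0 1) (hF : Measurable F)
    (hG : Measurable G) (hH : Measurable H) (hFtop : ⨆ x, F x ≠ ⊤) (hGtop : ⨆ x, G x ≠ ⊤)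
    (hFGH : ∀ x y, F x ^ t * G y ^ (1 - t) ≤ H (t • x + (1 - t) • y)) :
    (∫⁻ x, F x) ^ t * (∫⁻ x, G x) ^ (1 - t) ≤ ∫⁻ x, H x := by
  have h1t : 0 < 1 - t := sub_pos.2 ht.2
  rcases eq_or_ne (⨆ x, F x) 0 with hF0 | hF0
  · simp [ENNReal.iSup_eq_zero.1 hF0, ENNReal.zero_rpow_of_pos ht.1]
  rcases eq_or_ne (⨆ x, G x) 0 with hG0 | hG0
  · simp [ENNReal.iSup_eq_zero.1 hG0, ENNReal.zero_rpow_of_pos h1t]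
  -- rescaling `G` by `c` gives it the same supremum as `F`
  set c := (⨆ x, F x) / ⨆ x, G x
  have hc0 : c ^ (1 - t) ≠ 0 := by
    simp [c, ENNReal.rpow_eq_zero_iff, hF0, hGtop, h1t, not_lt_of_gt h1t]
  have hctop : c ^ (1 - t) ≠ ⊤ := by
    simp [c, ENNReal.rpow_eq_top_iff, ENNReal.div_eq_top, hFtop, hG0, h1t, not_lt_of_gt h1t]
  have key := add_le_lintegral_of_iSup_eq ht hF (hG.const_mul c) (hH.const_mul (c ^ (1 - t)))
    (by rw [← ENNReal.mul_iSup, ENNReal.div_mul_cancel hG0 hGtop])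
    (fun x y => by
      rw [ENNReal.mul_rpow_of_nonneg _ _ h1t.le, mul_left_comm]
      gcongr; exact hFGH x y)
  rw [lintegral_const_mul _ hG, lintegral_const_mul _ hH] at key
  refine (ENNReal.mul_le_mul_iff_right hc0 hctop).1 ?_
  calc c ^ (1 - t) * ((∫⁻ x, F x) ^ t * (∫⁻ x, G x) ^ (1 - t))
      = (∫⁻ x, F x) ^ t * (c * ∫⁻ x, G x) ^ (1 - t) := by
        rw [ENNReal.mul_rpow_of_nonneg _ _ h1t.le]; ring
    _ ≤ _ := ENNReal.rpow_mul_rpow_le_add ht _ _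
    _ ≤ _ := key

end Real

theorem prekopaLeindler_real : PrekopaLeindler ℝ := by
  intro t ht F G H hF hG hH hFGH
  have htrunc {φ : ℝ → ℝ≥0∞} (hφ : Measurable φ) :
      ∫⁻ x, φ x = ⨆ n : ℕ, ∫⁻ x, min (φ x) n := by
    rw [← lintegral_iSup (fun n => hφ.min measurable_const)
      (fun m n hmn x => min_le_min_left _ (Nat.cast_le.2 hmn))]
    congr with x
    rw [← inf_iSup_eq, ENNReal.iSup_natCast, inf_top_eq]
  have hmono (φ : ℝ → ℝ≥0∞) : Monotone fun n : ℕ => ∫⁻ x, min (φ x) n :=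
    fun m n hmn => lintegral_mono fun x => min_le_min_left _ (Nat.cast_le.2 hmn)
  rw [htrunc hF, htrunc hG]
  refine ENNReal.iSup_rpow_mul_iSup_rpow_le (hmono F) (hmono G) ht.1 (sub_pos.2 ht.2) fun n => ?_
  refine Real.prekopaLeindler_of_iSup_ne_top ht (hF.min measurable_const)
    (hG.min measurable_const) hH ?_ ?_ fun x y => le_trans ?_ (hFGH x y)
  · exact ne_top_of_le_ne_top (ENNReal.natCast_ne_top n) (iSup_le fun x => min_le_right _ _)
  · exact ne_top_of_le_ne_top (ENNReal.natCast_ne_top n) (iSup_le fun x => min_le_right _ _)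
  · exact mul_le_mul' (ENNReal.rpow_le_rpow (min_le_left _ _) ht.1.le)
      (ENNReal.rpow_le_rpow (min_le_left _ _) (sub_nonneg.2 ht.2.le))

namespace PrekopaLeindler

variable {E E' : Type*} [AddCommGroup E] [Module ℝ E] [MeasureSpace E]
  [AddCommGroup E'] [Module ℝ E'] [MeasureSpace E']

theorem of_unique [Unique E] [IsProbabilityMeasure (volume : Measure E)] :
    PrekopaLeindler E := by
  intro t _ F G H _ _ _ hFGH
  simpa [lintegral_unique, Unique.eq_default] using hFGH default default

theorem map (hE : PrekopaLeindler E) (g : E →ₗ[ℝ] E') (hg : MeasurePreserving g) :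
    PrekopaLeindler E' := by
  intro t ht F G H hF hG hH hFGH
  rw [← hg.lintegral_comp hF, ← hg.lintegral_comp hG, ← hg.lintegral_comp hH]
  exact hE ht (hF.comp hg.measurable) (hG.comp hg.measurable) (hH.comp hg.measurable)
    fun x y => by simpa using hFGH (g x) (g y)

/-- Tensorization: apply the inequality on `E'` to the sections and on `E` to the marginals. -/
theorem prod [SFinite (volume : Measure E')] (hE : PrekopaLeindler E)
    (hE' : PrekopaLeindler E') : PrekopaLeindler (E × E') := by
  intro t ht F G H hF hG hH hFGH
  rw [Measure.volume_eq_prod, lintegral_prod _ hF.aemeasurable, lintegral_prod _ hG.aemeasurable,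
    lintegral_prod _ hH.aemeasurable]
  exact hE ht hF.lintegral_prod_right' hG.lintegral_prod_right' hH.lintegral_prod_right'
    fun a b => hE' ht (hF.comp measurable_prodMk_left) (hG.comp measurable_prodMk_left)
      (hH.comp measurable_prodMk_left) fun p q => hFGH (a, p) (b, q)

theorem lintegral_le (hE : PrekopaLeindler E) {t : ℝ} (ht : t ∈ Ioo 0 1) {F G H : E → ℝ≥0∞}
    (hH : AEMeasurable H) (hFGH : ∀ x y, F x ^ t * G y ^ (1 - t) ≤ H (t • x + (1 - t) • y)) :
    (∫⁻ x, F x) ^ t * (∫⁻ x, G x) ^ (1 - t) ≤ ∫⁻ x, H x := by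
  obtain ⟨F', hF', hF'F, hFF'⟩ := exists_measurable_le_lintegral_eq volume F
  obtain ⟨G', hG', hG'G, hGG'⟩ := exists_measurable_le_lintegral_eq volume G
  obtain ⟨H', hH', hHH', hH'H⟩ := hH.exists_measurable_ge_lintegral_eq
  rw [hFF', hGG', ← hH'H]
  exact hE ht hF' hG' hH' fun x y =>
    (mul_le_mul' (ENNReal.rpow_le_rpow (hF'F x) ht.1.le)
      (ENNReal.rpow_le_rpow (hG'G y) (sub_nonneg.2 ht.2.le))).trans ((hFGH x y).trans (hHH' _))

end PrekopaLeindler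

lemma volume_preserving_consLinearEquiv (n : ℕ) :
    MeasurePreserving (Fin.consLinearEquiv ℝ fun _ : Fin (n + 1) => ℝ) := by
  convert (volume_preserving_piFinSuccAbove (fun _ : Fin (n + 1) => ℝ) 0).symm using 1
  ext p : 1
  exact (Fin.insertNth_zero' p.1 p.2).symm

theorem prekopaLeindler_pi (n : ℕ) : PrekopaLeindler (Fin n → ℝ) := by
  induction n with
  | zero =>
    have : IsProbabilityMeasure (volume : Measure (Fin 0 → ℝ)) := ⟨by simp [volume_pi]⟩
    exact .of_unique
  | succ n ih =>
    exact (prekopaLeindler_real.prod ih).map _ (volume_preserving_consLinearEquiv n)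

theorem prekopaLeindler_euclideanSpace (n : ℕ) : PrekopaLeindler (EuclideanSpace ℝ (Fin n)) :=
  (prekopaLeindler_pi n).map (WithLp.linearEquiv 2 ℝ (Fin n → ℝ)).symm.toLinearMap
    (PiLp.volume_preserving_toLp (Fin n))

/-- Prékopa: If `f : ℝ^d × ℝ^m → ℝ≥0` is jointly log-concave in `(z,x)` and
integrable in `x` for each `z`, then the marginal `h z = ∫ f(z,x) dx` is log-concave in `z`. -/
theorem prekopa_marginal_log_concave
    (d m : ℕ)
    (f : EuclideanSpace ℝ (Fin d) × EuclideanSpace ℝ (Fin m) → ℝ)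
    (hf_nonneg : ∀ p, 0 ≤ f p)
    (hf_logconcave : ∀ (p q : EuclideanSpace ℝ (Fin d) × EuclideanSpace ℝ (Fin m)),
      ∀ l : ℝ, 0 ≤ l → l ≤ 1 →
        f p ^ l * f q ^ (1 - l) ≤ f (l • p + (1 - l) • q))
    (hf_int : ∀ z, Integrable (fun x => f (z, x)))
    (h : EuclideanSpace ℝ (Fin d) → ℝ)
    (hh : ∀ z, h z = ∫ x, f (z, x)) :
    ∀ (z₁ z₂ : EuclideanSpace ℝ (Fin d)), ∀ l : ℝ, 0 ≤ l → l ≤ 1 →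
      h z₁ ^ l * h z₂ ^ (1 - l) ≤ h (l • z₁ + (1 - l) • z₂) := by
  intro z₁ z₂ l hl0 hl1
  rcases hl0.eq_or_lt with rfl | hl0'
  · simp
  rcases hl1.eq_or_lt with rfl | hl1'
  · simp
  have h1l : 0 ≤ 1 - l := sub_nonneg.2 hl1
  have hh_nonneg (z) : 0 ≤ h z := hh z ▸ integral_nonneg fun x => hf_nonneg _
  have hh_lintegral (z) : ENNReal.ofReal (h z) = ∫⁻ x, ENNReal.ofReal (f (z, x)) := by
    rw [hh, ofReal_integral_eq_lintegral_ofReal (hf_int z) (ae_of_all _ fun x => hf_nonneg _)]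
  have key := (prekopaLeindler_euclideanSpace m).lintegral_le ⟨hl0', hl1'⟩
    (F := fun x => ENNReal.ofReal (f (z₁, x))) (G := fun x => ENNReal.ofReal (f (z₂, x)))
    (hf_int (l • z₁ + (1 - l) • z₂)).aemeasurable.ennreal_ofReal fun x y => by
      rw [ENNReal.ofReal_rpow_mul_ofReal_rpow (hf_nonneg _) (hf_nonneg _) hl0 h1l]
      exact ENNReal.ofReal_le_ofReal (hf_logconcave (z₁, x) (z₂, y) l hl0 hl1)
  rw [← hh_lintegral, ← hh_lintegral, ← hh_lintegral,
    ENNReal.ofReal_rpow_mul_ofReal_rpow (hh_nonneg _) (hh_nonneg _) hl0 h1l] at key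
  exact (ENNReal.ofReal_le_ofReal_iff (hh_nonneg _)).1 key
end

section
/- If p(x) > 0 and q(z | x) > 0 (as a function of (z,x)) are each log-concave, then the product (z,x) ↦ q(z|x)·p(x) is jointly log-concave, and consequently the induced marginal z ↦ ∫ q(z|x)p(x)dx is log-concave. -/
/-!
The first claim is additivity of `log`. The second is Prékopa's theorem: for `λ ∈ (0, 1)` the
joint log-concavity of `F(z, x) = q(z | x) p(x)` gives
`F(z₀, x)^λ F(z₁, y)^(1-λ) ≤ F(λ z₀ + (1-λ) z₁, λ x + (1-λ) y)`, and the Prékopa–Leindler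
inequality turns this into the same inequality for the integrals over `x`.

Prékopa–Leindler is proved on `ℝ` by the level-set argument: when `sup f = sup g`, the
superlevel sets at height `s` are empty or nonempty together, and for nonempty ones
`λ {f > s} + (1-λ) {g > s} ⊆ {h > s}`, so the one-dimensional Brunn–Minkowski inequality
`|A| + |B| ≤ |A + B|` and the layer-cake formula give `λ ∫ f + (1-λ) ∫ g ≤ ∫ h`. Rescaling to
`sup f = sup g = 1`, weighted AM-GM and truncation give the multiplicative form, which then
tensorizes to `ℝⁿ` by Fubini.
-/

open MeasureTheory Set Filter Topology
open scoped ENNReal Pointwise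

theorem ENNReal.rpow_mul_rpow_one_sub_le {a b : ℝ≥0∞} {l : ℝ} (hl0 : 0 < l) (hl1 : l < 1) :
    a ^ l * b ^ (1 - l) ≤ ENNReal.ofReal l * a + ENNReal.ofReal (1 - l) * b := by
  have hl1' : 0 < 1 - l := sub_pos.mpr hl1
  have key := ENNReal.young_inequality (a ^ l) (b ^ (1 - l))
    (Real.HolderConjugate.inv_one_sub_inv hl0 hl1)
  rwa [← ENNReal.rpow_mul, ← ENNReal.rpow_mul, mul_inv_cancel₀ hl0.ne',
    mul_inv_cancel₀ hl1'.ne', ENNReal.rpow_one, ENNReal.rpow_one, ENNReal.ofReal_inv_of_pos hl0,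
    ENNReal.ofReal_inv_of_pos hl1', div_eq_mul_inv, div_eq_mul_inv, inv_inv, inv_inv,
    mul_comm a, mul_comm b] at key

theorem Real.volume_add_volume_le_volume_add_of_isCompact {K L : Set ℝ} (hK : IsCompact K)
    (hL : IsCompact L) (hKne : K.Nonempty) (hLne : L.Nonempty) :
    volume K + volume L ≤ volume (K + L) := by
  set a := sSup K
  set b := sInf L
  -- `b + K` and `a + L` lie in `K + L` and meet only at `a + b`.
  have hinter : (b +ᵥ K) ∩ (a +ᵥ L) ⊆ {a + b} := by
    rintro _ ⟨⟨k, hk, rfl⟩, ⟨l, hl, hx⟩⟩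
    have := le_csSup hK.bddAbove hk
    have := csInf_le hL.bddBelow hl
    simp only [vadd_eq_add, mem_singleton_iff] at hx ⊢
    linarith
  have hunion : (b +ᵥ K) ∪ (a +ᵥ L) ⊆ K + L := by
    rintro _ (⟨k, hk, rfl⟩ | ⟨l, hl, rfl⟩)
    · exact ⟨k, hk, b, hL.sInf_mem hLne, add_comm _ _⟩
    · exact ⟨a, hK.sSup_mem hKne, l, hl, rfl⟩
  calc volume K + volume L = volume (b +ᵥ K) + volume (a +ᵥ L) := by
        rw [measure_vadd, measure_vadd]
    _ = volume ((b +ᵥ K) ∪ (a +ᵥ L)) := by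
        rw [← measure_union_add_inter _ (hL.vadd a).measurableSet,
          measure_mono_null hinter (measure_singleton _), add_zero]
    _ ≤ volume (K + L) := measure_mono hunion

theorem Real.volume_add_volume_le_volume_add_s12 {A B : Set ℝ} (hA : MeasurableSet A)
    (hB : MeasurableSet B) (hAne : A.Nonempty) (hBne : B.Nonempty) :
    volume A + volume B ≤ volume (A + B) := by
  obtain ⟨a, ha⟩ := hAne
  obtain ⟨b, hb⟩ := hBne
  have hA_le : volume A ≤ volume (A + B) := by
    rw [← measure_vadd volume b A]
    exact measure_mono fun _ ⟨x, hx, hbx⟩ => ⟨x, hx, b, hb, by simp [← hbx, add_comm]⟩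
  have hB_le : volume B ≤ volume (A + B) := by
    rw [← measure_vadd volume a B]
    exact measure_mono fun _ ⟨y, hy, hay⟩ => ⟨a, ha, y, hy, hay⟩
  rcases eq_or_ne (volume A) ∞ with hAtop | hAtop
  · simp [top_le_iff.mp (hAtop ▸ hA_le)]
  rcases eq_or_ne (volume B) ∞ with hBtop | hBtop
  · simp [top_le_iff.mp (hBtop ▸ hB_le)]
  refine ENNReal.le_of_forall_pos_le_add fun ε hε _ => ?_
  have hε2 : (ε / 2 : ℝ≥0∞) ≠ 0 := by simp [hε.ne']
  obtain ⟨K, hKA, hK, hKv⟩ := hA.exists_isCompact_lt_add hAtop hε2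
  obtain ⟨L, hLB, hL, hLv⟩ := hB.exists_isCompact_lt_add hBtop hε2
  -- `K` and `L` may be empty: add a point of `A` and of `B` before applying the compact case.
  calc volume A + volume B ≤ (volume K + volume L) + ε := by
        calc volume A + volume B ≤ (volume K + ε / 2) + (volume L + ε / 2) :=
              add_le_add hKv.le hLv.le
          _ = _ := by rw [add_add_add_comm, ENNReal.add_halves]
    _ ≤ (volume (insert a K) + volume (insert b L)) + ε := by
        gcongr <;> exact subset_insert _ _
    _ ≤ volume (insert a K + insert b L) + ε := by
        gcongr
        exact Real.volume_add_volume_le_volume_add_of_isCompact (hK.insert a) (hL.insert b)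
          (insert_nonempty _ _) (insert_nonempty _ _)
    _ ≤ volume (A + B) + ε := by
        gcongr
        exacts [insert_subset ha hKA, insert_subset hb hLB]

theorem Real.volume_Ioi_inter_ofReal_lt (a : ℝ≥0∞) :
    volume (Ioi 0 ∩ {t : ℝ | ENNReal.ofReal t < a}) = a := by
  rcases eq_or_ne a ∞ with rfl | ha
  · simp
  have : Ioi 0 ∩ {t : ℝ | ENNReal.ofReal t < a} = Ioo 0 a.toReal := by
    ext t
    simp only [mem_inter_iff, mem_Ioi, mem_ofPred_eq, mem_Ioo, and_congr_right_iff]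
    exact fun ht => ENNReal.ofReal_lt_iff_lt_toReal ht.le ha
  rw [this, Real.volume_Ioo, sub_zero, ENNReal.ofReal_toReal ha]

theorem lintegral_eq_lintegral_Ioi_measure_ofReal_lt {α : Type*} [MeasurableSpace α]
    (μ : Measure α) [SFinite μ] {u : α → ℝ≥0∞} (hu : Measurable u) :
    ∫⁻ x, u x ∂μ = ∫⁻ t in Ioi (0 : ℝ), μ {x | ENNReal.ofReal t < u x} := by
  let W : Set (α × ℝ) := {p | ENNReal.ofReal p.2 < u p.1}
  have hW : MeasurableSet W :=
    measurableSet_lt (ENNReal.measurable_ofReal.comp measurable_snd) (hu.comp measurable_fst)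
  calc ∫⁻ x, u x ∂μ = ∫⁻ x, (∫⁻ t in Ioi (0 : ℝ), W.indicator 1 (x, t)) ∂μ := by
        refine lintegral_congr fun x => ?_
        have hmeas : MeasurableSet {t : ℝ | ENNReal.ofReal t < u x} :=
          measurableSet_lt ENNReal.measurable_ofReal measurable_const
        rw [← Real.volume_Ioi_inter_ofReal_lt (u x), inter_comm, ← Measure.restrict_apply hmeas,
          ← lintegral_indicator_one hmeas]
        rfl
    _ = ∫⁻ t in Ioi (0 : ℝ), ∫⁻ x, W.indicator 1 (x, t) ∂μ :=
        lintegral_lintegral_swap ((measurable_one.indicator hW).comp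
          (measurable_fst.prodMk measurable_snd)).aemeasurable
    _ = ∫⁻ t in Ioi (0 : ℝ), μ {x | ENNReal.ofReal t < u x} := by
        refine lintegral_congr fun t => ?_
        rw [← lintegral_indicator_one (measurableSet_lt measurable_const hu)]
        rfl

theorem tendsto_lintegral_min_natCast {α : Type*} [MeasurableSpace α] {μ : Measure α}
    {u : α → ℝ≥0∞} (hu : Measurable u) :
    Tendsto (fun N : ℕ => ∫⁻ x, min (u x) N ∂μ) atTop (𝓝 (∫⁻ x, u x ∂μ)) :=
  lintegral_tendsto_of_tendsto_of_monotone (fun N => (hu.min measurable_const).aemeasurable)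
    (ae_of_all _ fun x M N hMN => min_le_min le_rfl (Nat.cast_le.mpr hMN))
    (ae_of_all _ fun x => by simpa using tendsto_const_nhds.min ENNReal.tendsto_nat_nhds_top)

theorem smul_setOf_lt_add_smul_setOf_lt_subset {E : Type*} [AddCommMonoid E] [Module ℝ E]
    {f g h : E → ℝ≥0∞} {l : ℝ} (hl0 : 0 < l) (hl1 : l < 1)
    (hfgh : ∀ x y, f x ^ l * g y ^ (1 - l) ≤ h (l • x + (1 - l) • y)) (s : ℝ≥0∞) :
    l • {x | s < f x} + (1 - l) • {y | s < g y} ⊆ {z | s < h z} := by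
  rintro _ ⟨_, ⟨x, hx, rfl⟩, _, ⟨y, hy, rfl⟩, rfl⟩
  calc s = s ^ l * s ^ (1 - l) := by
        rw [← ENNReal.rpow_add_of_nonneg _ _ hl0.le (sub_pos.mpr hl1).le, add_sub_cancel,
          ENNReal.rpow_one]
    _ < f x ^ l * g y ^ (1 - l) :=
        ENNReal.mul_lt_mul (ENNReal.rpow_lt_rpow hx hl0)
          (ENNReal.rpow_lt_rpow hy (sub_pos.mpr hl1))
    _ ≤ h (l • x + (1 - l) • y) := hfgh x y

section PrekopaLeindlerReal

variable {l : ℝ} {f g h : ℝ → ℝ≥0∞}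

theorem Real.volume_setOf_lt_le_of_iSup_eq (hl0 : 0 < l) (hl1 : l < 1) (hf : Measurable f)
    (hg : Measurable g) (hsup : ⨆ x, f x = ⨆ y, g y)
    (hfgh : ∀ x y, f x ^ l * g y ^ (1 - l) ≤ h (l * x + (1 - l) * y)) (s : ℝ≥0∞) :
    ENNReal.ofReal l * volume {x | s < f x} + ENNReal.ofReal (1 - l) * volume {y | s < g y} ≤
      volume {z | s < h z} := by
  by_cases hs : s < ⨆ x, f x
  · have hA : {x | s < f x}.Nonempty := lt_iSup_iff.mp hs
    have hB : {y | s < g y}.Nonempty := lt_iSup_iff.mp (hs.trans_eq hsup)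
    calc ENNReal.ofReal l * volume {x | s < f x} + ENNReal.ofReal (1 - l) * volume {y | s < g y}
        = volume (l • {x | s < f x}) + volume ((1 - l) • {y | s < g y}) := by
          rw [Measure.addHaar_smul_of_nonneg _ hl0.le,
            Measure.addHaar_smul_of_nonneg _ (sub_pos.mpr hl1).le, Module.finrank_self, pow_one,
            pow_one]
      _ ≤ volume (l • {x | s < f x} + (1 - l) • {y | s < g y}) :=
          Real.volume_add_volume_le_volume_add_s12
            ((measurableSet_lt measurable_const hf).const_smul₀ l)
            ((measurableSet_lt measurable_const hg).const_smul₀ (1 - l)) hA.smul_set hB.smul_set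
      _ ≤ volume {z | s < h z} :=
          measure_mono (smul_setOf_lt_add_smul_setOf_lt_subset hl0 hl1 hfgh s)
  · have hA : {x | s < f x} = ∅ :=
      eq_empty_of_forall_notMem fun x hx => hs (hx.trans_le (le_iSup f x))
    have hB : {y | s < g y} = ∅ :=
      eq_empty_of_forall_notMem fun y hy => hs (hsup ▸ hy.trans_le (le_iSup g y))
    simp [hA, hB]

theorem Real.lintegral_add_le_of_iSup_eq (hl0 : 0 < l) (hl1 : l < 1) (hf : Measurable f)
    (hg : Measurable g) (hh : Measurable h) (hsup : ⨆ x, f x = ⨆ y, g y)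
    (hfgh : ∀ x y, f x ^ l * g y ^ (1 - l) ≤ h (l * x + (1 - l) * y)) :
    ENNReal.ofReal l * (∫⁻ x, f x) + ENNReal.ofReal (1 - l) * (∫⁻ y, g y) ≤ ∫⁻ z, h z := by
  have hf_level : Measurable fun t : ℝ => volume {x | ENNReal.ofReal t < f x} :=
    Antitone.measurable fun s t hst =>
      measure_mono fun x hx => (ENNReal.ofReal_le_ofReal hst).trans_lt hx
  rw [lintegral_eq_lintegral_Ioi_measure_ofReal_lt volume hf,
    lintegral_eq_lintegral_Ioi_measure_ofReal_lt volume hg,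
    lintegral_eq_lintegral_Ioi_measure_ofReal_lt volume hh,
    ← lintegral_const_mul' _ _ ENNReal.ofReal_ne_top,
    ← lintegral_const_mul' _ _ ENNReal.ofReal_ne_top, ← lintegral_add_left (hf_level.const_mul _)]
  exact lintegral_mono fun t => Real.volume_setOf_lt_le_of_iSup_eq hl0 hl1 hf hg hsup hfgh _

theorem Real.lintegral_rpow_mul_lintegral_rpow_le_of_iSup_ne_top (hl0 : 0 < l) (hl1 : l < 1)
    (hf : Measurable f) (hg : Measurable g) (hh : Measurable h) (hf_bdd : ⨆ x, f x ≠ ∞)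
    (hg_bdd : ⨆ y, g y ≠ ∞)
    (hfgh : ∀ x y, f x ^ l * g y ^ (1 - l) ≤ h (l * x + (1 - l) * y)) :
    (∫⁻ x, f x) ^ l * (∫⁻ y, g y) ^ (1 - l) ≤ ∫⁻ z, h z := by
  have hl1' : 0 < 1 - l := sub_pos.mpr hl1
  rcases eq_or_ne (⨆ x, f x) 0 with hf0 | hf0
  · simp [lintegral_congr fun x => ENNReal.iSup_eq_zero.mp hf0 x, hl0]
  rcases eq_or_ne (⨆ y, g y) 0 with hg0 | hg0
  · simp [lintegral_congr fun y => ENNReal.iSup_eq_zero.mp hg0 y, hl1']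
  set a := (⨆ x, f x)⁻¹
  set b := (⨆ y, g y)⁻¹
  set c := a ^ l * b ^ (1 - l)
  have ha : a ≠ ∞ := ENNReal.inv_ne_top.mpr hf0
  have hb : b ≠ ∞ := ENNReal.inv_ne_top.mpr hg0
  have hc0 : c ≠ 0 := mul_ne_zero (ENNReal.rpow_pos (ENNReal.inv_pos.mpr hf_bdd) ha).ne'
    (ENNReal.rpow_pos (ENNReal.inv_pos.mpr hg_bdd) hb).ne'
  have hc : c ≠ ∞ := ENNReal.mul_ne_top (ENNReal.rpow_ne_top_of_nonneg hl0.le ha)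
    (ENNReal.rpow_ne_top_of_nonneg hl1'.le hb)
  have hscale : ∀ u v, (a * u) ^ l * (b * v) ^ (1 - l) = c * (u ^ l * v ^ (1 - l)) := by
    intro u v
    rw [ENNReal.mul_rpow_of_nonneg _ _ hl0.le, ENNReal.mul_rpow_of_nonneg _ _ hl1'.le]
    ring
  have hsup : ⨆ x, a * f x = ⨆ y, b * g y := by
    rw [← ENNReal.mul_iSup, ← ENNReal.mul_iSup, ENNReal.inv_mul_cancel hf0 hf_bdd,
      ENNReal.inv_mul_cancel hg0 hg_bdd]
  have hadd := Real.lintegral_add_le_of_iSup_eq hl0 hl1 (hf.const_mul a) (hg.const_mul b)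
    (hh.const_mul c) hsup fun x y => (hscale _ _).trans_le (by gcongr; exact hfgh x y)
  rw [lintegral_const_mul _ hf, lintegral_const_mul _ hg, lintegral_const_mul _ hh] at hadd
  refine (ENNReal.mul_le_mul_iff_right hc0 hc).mp ?_
  calc c * ((∫⁻ x, f x) ^ l * (∫⁻ y, g y) ^ (1 - l))
      = (a * ∫⁻ x, f x) ^ l * (b * ∫⁻ y, g y) ^ (1 - l) := (hscale _ _).symm
    _ ≤ _ := ENNReal.rpow_mul_rpow_one_sub_le hl0 hl1
    _ ≤ c * ∫⁻ z, h z := hadd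

theorem Real.prekopaLeindler (hl0 : 0 < l) (hl1 : l < 1) (hf : Measurable f)
    (hg : Measurable g) (hh : Measurable h)
    (hfgh : ∀ x y, f x ^ l * g y ^ (1 - l) ≤ h (l * x + (1 - l) * y)) :
    (∫⁻ x, f x) ^ l * (∫⁻ y, g y) ^ (1 - l) ≤ ∫⁻ z, h z := by
  rcases eq_or_ne (∫⁻ x, f x) 0 with hf0 | hf0
  · simp [hf0, hl0]
  rcases eq_or_ne (∫⁻ y, g y) 0 with hg0 | hg0
  · simp [hg0, sub_pos.mpr hl1]
  have hlim : Tendsto (fun N : ℕ => (∫⁻ x, min (f x) N) ^ l * (∫⁻ y, min (g y) N) ^ (1 - l))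
      atTop (𝓝 ((∫⁻ x, f x) ^ l * (∫⁻ y, g y) ^ (1 - l))) :=
    ENNReal.Tendsto.mul
      ((ENNReal.continuous_rpow_const.tendsto _).comp (tendsto_lintegral_min_natCast hf))
      (Or.inl (by simp [hf0, hl0.le]))
      ((ENNReal.continuous_rpow_const.tendsto _).comp (tendsto_lintegral_min_natCast hg))
      (Or.inl (by simp [hg0, hl1.le]))
  refine le_of_tendsto' hlim fun N => ?_
  refine Real.lintegral_rpow_mul_lintegral_rpow_le_of_iSup_ne_top hl0 hl1
    (hf.min measurable_const) (hg.min measurable_const) hh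
    (ne_top_of_le_ne_top (ENNReal.natCast_ne_top N) (iSup_le fun x => min_le_right _ _))
    (ne_top_of_le_ne_top (ENNReal.natCast_ne_top N) (iSup_le fun x => min_le_right _ _))
    fun x y => le_trans ?_ (hfgh x y)
  gcongr <;> exact min_le_left _ _

end PrekopaLeindlerReal

def HasPrekopaLeindler (E : Type*) [MeasureSpace E] [AddCommMonoid E] [Module ℝ E] : Prop :=
  ∀ ⦃l : ℝ⦄, 0 < l → l < 1 → ∀ ⦃f g h : E → ℝ≥0∞⦄, Measurable f → Measurable g → Measurable h →
    (∀ x y, f x ^ l * g y ^ (1 - l) ≤ h (l • x + (1 - l) • y)) →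
    (∫⁻ x, f x) ^ l * (∫⁻ y, g y) ^ (1 - l) ≤ ∫⁻ z, h z

namespace HasPrekopaLeindler

variable {E F : Type*} [MeasureSpace E] [AddCommMonoid E] [Module ℝ E]
  [MeasureSpace F] [AddCommMonoid F] [Module ℝ F]

theorem real : HasPrekopaLeindler ℝ := fun _ hl0 hl1 _ _ _ hf hg hh hfgh =>
  Real.prekopaLeindler hl0 hl1 hf hg hh hfgh

/-- Tensorization: apply the inequality on `F` fibrewise and then on `E` to the fibre integrals. -/
theorem prod [SFinite (volume : Measure F)] (hE : HasPrekopaLeindler E)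
    (hF : HasPrekopaLeindler F) : HasPrekopaLeindler (E × F) := by
  intro l hl0 hl1 f g h hf hg hh hfgh
  simp only [Measure.volume_eq_prod, lintegral_prod _ hf.aemeasurable,
    lintegral_prod _ hg.aemeasurable, lintegral_prod _ hh.aemeasurable]
  refine hE hl0 hl1 hf.lintegral_prod_right' hg.lintegral_prod_right' hh.lintegral_prod_right'
    fun s t => hF hl0 hl1 (hf.comp measurable_prodMk_left) (hg.comp measurable_prodMk_left)
      (hh.comp measurable_prodMk_left) fun x y => ?_
  simpa using hfgh (s, x) (t, y)

theorem of_measurePreserving (hF : HasPrekopaLeindler F) (e : E ≃ᵐ F)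
    (he : MeasurePreserving e) (hlin : IsLinearMap ℝ e) : HasPrekopaLeindler E := by
  intro l hl0 hl1 f g h hf hg hh hfgh
  have hsymm : ∀ (a b : ℝ) (u v : F), e.symm (a • u + b • v) = a • e.symm u + b • e.symm v :=
    fun a b u v => e.injective <| by simp [hlin.map_add, hlin.map_smul]
  have key := hF hl0 hl1 (hf.comp e.symm.measurable) (hg.comp e.symm.measurable)
    (hh.comp e.symm.measurable) fun u v => by simpa [hsymm] using hfgh (e.symm u) (e.symm v)
  simpa only [Function.comp_apply,
    (he.symm e).lintegral_comp_emb e.symm.measurableEmbedding] using key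

theorem pi_fin (n : ℕ) : HasPrekopaLeindler (Fin n → ℝ) := by
  induction n with
  | zero =>
    intro l hl0 hl1 f g h _ _ _ hfgh
    simp only [Measure.volume_pi_eq_dirac (isEmptyElim : Fin 0 → ℝ), lintegral_dirac]
    convert hfgh isEmptyElim isEmptyElim using 2
  | succ n ih =>
    refine (real.prod ih).of_measurePreserving _
      (volume_preserving_piFinSuccAbove (fun _ => ℝ) 0) ⟨fun x y => ?_, fun c x => ?_⟩ <;>
    ext <;> simp [MeasurableEquiv.piFinSuccAbove, Fin.tail]

theorem pi (ι : Type*) [Fintype ι] : HasPrekopaLeindler (ι → ℝ) := by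
  refine (pi_fin _).of_measurePreserving _
    (volume_measurePreserving_piCongrLeft (fun _ => ℝ) (Fintype.equivFin ι))
    ⟨fun x y => ?_, fun c x => ?_⟩ <;>
  ext <;> simp [MeasurableEquiv.coe_piCongrLeft, Equiv.piCongrLeft_apply]

theorem euclideanSpace (ι : Type*) [Fintype ι] : HasPrekopaLeindler (EuclideanSpace ℝ ι) :=
  (pi ι).of_measurePreserving _ (EuclideanSpace.volume_preserving_symm_measurableEquiv_toLp ι)
    ⟨fun _ _ => rfl, fun _ _ => rfl⟩

end HasPrekopaLeindler

theorem concaveOn_univ_log_iff {E : Type*} [AddCommMonoid E] [Module ℝ E] {f : E → ℝ}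
    (hf : ∀ x, 0 < f x) :
    ConcaveOn ℝ univ (fun x => Real.log (f x)) ↔
      ∀ x y (a b : ℝ), 0 < a → 0 < b → a + b = 1 → f x ^ a * f y ^ b ≤ f (a • x + b • y) := by
  have hlog : ∀ x y (a b : ℝ),
      Real.log (f x ^ a * f y ^ b) = a • Real.log (f x) + b • Real.log (f y) := fun x y a b => by
    rw [Real.log_mul (Real.rpow_pos_of_pos (hf x) a).ne' (Real.rpow_pos_of_pos (hf y) b).ne',
      Real.log_rpow (hf x), Real.log_rpow (hf y), smul_eq_mul, smul_eq_mul]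
  simp only [concaveOn_iff_forall_pos, convex_univ, mem_univ, true_and, forall_const, ← hlog,
    Real.log_le_log_iff (mul_pos (Real.rpow_pos_of_pos (hf _) _) (Real.rpow_pos_of_pos (hf _) _))
      (hf _)]

theorem continuous_of_concaveOn_log {E : Type*} [NormedAddCommGroup E] [NormedSpace ℝ E]
    [FiniteDimensional ℝ E] {f : E → ℝ} (hf : ∀ x, 0 < f x)
    (hlog : ConcaveOn ℝ univ fun x => Real.log (f x)) : Continuous f := by
  simpa [Real.exp_log (hf _)] using (continuousOn_univ.mp (hlog.continuousOn isOpen_univ)).rexp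

/-- **Prékopa's theorem**. -/
theorem HasPrekopaLeindler.concaveOn_log_integral {E X : Type*} [AddCommMonoid E] [Module ℝ E]
    [MeasureSpace X] [AddCommMonoid X] [Module ℝ X] [NeZero (volume : Measure X)]
    (hX : HasPrekopaLeindler X) {F : E × X → ℝ} (hF_pos : ∀ zx, 0 < F zx)
    (hF_meas : ∀ z, Measurable fun x => F (z, x)) (hF_int : ∀ z, Integrable fun x => F (z, x))
    (hF : ConcaveOn ℝ univ fun zx => Real.log (F zx)) :
    ConcaveOn ℝ univ fun z => Real.log (∫ x, F (z, x)) := by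
  have hM_pos : ∀ z, 0 < ∫ x, F (z, x) := fun z =>
    (integral_pos_iff_support_of_nonneg (fun x => (hF_pos _).le) (hF_int z)).mpr <| by
      rw [eq_univ_of_forall (s := Function.support fun x => F (z, x))
        fun x => (hF_pos (z, x)).ne']
      exact Measure.measure_univ_pos.mpr (NeZero.ne _)
  rw [concaveOn_univ_log_iff hF_pos] at hF
  rw [concaveOn_univ_log_iff hM_pos]
  intro z₀ z₁ a b ha hb hab
  obtain rfl : b = 1 - a := by linarith
  have hofReal : ∀ {u v w : ℝ}, 0 ≤ u → 0 ≤ v → 0 ≤ w →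
      (ENNReal.ofReal u ^ a * ENNReal.ofReal v ^ (1 - a) ≤ ENNReal.ofReal w ↔
        u ^ a * v ^ (1 - a) ≤ w) := fun hu hv hw => by
    rw [ENNReal.ofReal_rpow_of_nonneg hu ha.le, ENNReal.ofReal_rpow_of_nonneg hv hb.le,
      ← ENNReal.ofReal_mul (Real.rpow_nonneg hu _), ENNReal.ofReal_le_ofReal_iff hw]
  have hlintegral : ∀ z, ∫⁻ x, ENNReal.ofReal (F (z, x)) = ENNReal.ofReal (∫ x, F (z, x)) :=
    fun z => (ofReal_integral_eq_lintegral_ofReal (hF_int z)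
      (ae_of_all _ fun x => (hF_pos _).le)).symm
  have key := hX ha (by linarith) (hF_meas z₀).ennreal_ofReal (hF_meas z₁).ennreal_ofReal
    (hF_meas (a • z₀ + (1 - a) • z₁)).ennreal_ofReal fun x y =>
      (hofReal (hF_pos _).le (hF_pos _).le (hF_pos _).le).mpr
        (hF (z₀, x) (z₁, y) a (1 - a) ha hb hab)
  rwa [hlintegral, hlintegral, hlintegral,
    hofReal (hM_pos _).le (hM_pos _).le (hM_pos _).le] at key

/-- If `p > 0` and `q > 0` (jointly in `(z,x)`) are each log-concave
(`log` of the function is concave), then `(z,x) ↦ q(z|x) p(x)` is jointly log-concave,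
and the induced marginal `z ↦ ∫ q(z|x) p(x) dx` is log-concave. -/
theorem product_and_marginal_log_concave
    (d : ℕ)
    (p : EuclideanSpace ℝ (Fin d) → ℝ)
    (q : EuclideanSpace ℝ (Fin d) × EuclideanSpace ℝ (Fin d) → ℝ)
    (hp_pos : ∀ x, 0 < p x)
    (hq_pos : ∀ zx, 0 < q zx)
    (hp_lc : ConcaveOn ℝ Set.univ (fun x => Real.log (p x)))
    (hq_lc : ConcaveOn ℝ Set.univ (fun zx => Real.log (q zx)))
    (hint : ∀ z, Integrable (fun x => q (z, x) * p x)) :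
    ConcaveOn ℝ Set.univ (fun zx : EuclideanSpace ℝ (Fin d) × EuclideanSpace ℝ (Fin d) =>
        Real.log (q zx * p zx.2)) ∧
      ConcaveOn ℝ Set.univ (fun z => Real.log (∫ x, q (z, x) * p x)) := by
  have hpos : ∀ zx : EuclideanSpace ℝ (Fin d) × EuclideanSpace ℝ (Fin d), 0 < q zx * p zx.2 :=
    fun zx => mul_pos (hq_pos zx) (hp_pos zx.2)
  have hjoint : ConcaveOn ℝ univ
      fun zx : EuclideanSpace ℝ (Fin d) × EuclideanSpace ℝ (Fin d) => Real.log (q zx * p zx.2) :=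
    (hq_lc.add (hp_lc.comp_linearMap (LinearMap.snd ℝ _ _))).congr fun zx _ =>
      (Real.log_mul (hq_pos zx).ne' (hp_pos zx.2).ne').symm
  have hmeas : ∀ z, Measurable fun x => q (z, x) * p x := fun z =>
    ((continuous_of_concaveOn_log hpos hjoint).comp (Continuous.prodMk_right z)).measurable
  exact ⟨hjoint,
    (HasPrekopaLeindler.euclideanSpace (Fin d)).concaveOn_log_integral hpos hmeas hint hjoint⟩
end
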